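/- For M ≥ 1, let ρ_M : [0,1] → ℝ be given by ρ_M(t) = (1−t²)^{−1/2} for 0 ≤ t ≤ 1/√2 and ρ_M(t) = t(1 − √(M²−1)) + √( t²(M² − 2√(M²−1)) + 2√(M²−1) ) for 1/√2 ≤ t ≤ 1, and define w(M) = 2·ρ_M(1)⁴ − 3·(∫₀¹ ρ_M(t)³ dt)·(ρ_M(1) + ρ_M'(1)), where ρ_M'(1) is the one-sided derivative at t = 1. Then w(M) → 2 as M → ∞. -/

import Mathlib

open Set Filter

/-- The radial profile of the body `K_M` in `ℝ⁴`, a cylinder of radius `1` and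
height `2` with two spherical caps of radius `M` attached:
`ρ_M(t) = (1−t²)^{−1/2}` for `0 ≤ t ≤ 1/√2` and
`ρ_M(t) = t(1 − √(M²−1)) + √(t²(M² − 2√(M²−1)) + 2√(M²−1))` for `1/√2 ≤ t ≤ 1`. -/
noncomputable def ρKM (M t : ℝ) : ℝ :=
  if t ≤ (Real.sqrt 2)⁻¹ then (Real.sqrt (1 - t ^ 2))⁻¹
  else t * (1 - Real.sqrt (M ^ 2 - 1)) +
    Real.sqrt (t ^ 2 * (M ^ 2 - 2 * Real.sqrt (M ^ 2 - 1)) + 2 * Real.sqrt (M ^ 2 - 1))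

/-- The quantity `w(M) = 2ρ_M(1)⁴ − 3(∫₀¹ ρ_M³)(ρ_M(1) + ρ_M'(1))` of the
four-dimensional criterion, with `ρ_M'(1)` the one-sided derivative at `t = 1`. -/
noncomputable def wKM (M : ℝ) : ℝ :=
  2 * ρKM M 1 ^ 4 - 3 * (∫ t in (0 : ℝ)..1, ρKM M t ^ 3)
    * (ρKM M 1 + derivWithin (ρKM M) (Iic 1) 1)

lemma sqrt2_inv_lt_one : (Real.sqrt 2)⁻¹ < 1 := by
  have h : (1:ℝ) < Real.sqrt 2 := by
    nlinarith [Real.sq_sqrt (by norm_num : (2:ℝ) ≥ 0), Real.sqrt_nonneg 2]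
  exact inv_lt_one_of_one_lt₀ h

lemma sqrt2_inv_ge_half : (1:ℝ)/2 ≤ (Real.sqrt 2)⁻¹ := by
  have h2 : Real.sqrt 2 ≤ 2 := by
    nlinarith [Real.sq_sqrt (by norm_num : (2:ℝ) ≥ 0), Real.sqrt_nonneg 2]
  have h0 : (0:ℝ) < Real.sqrt 2 := Real.sqrt_pos.mpr (by norm_num)
  rw [div_le_iff₀ (by norm_num), inv_mul_eq_div, le_div_iff₀ h0]
  linarith

lemma sFacts {M : ℝ} (hM : 2 ≤ M) :
    Real.sqrt (M^2 - 1) ^ 2 = M^2 - 1 ∧ 1 ≤ Real.sqrt (M^2 - 1) ∧ Real.sqrt (M^2-1) ≤ M := by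
  have h1 : (0:ℝ) ≤ M^2 - 1 := by nlinarith
  refine ⟨Real.sq_sqrt h1, ?_, ?_⟩
  · nlinarith [Real.sq_sqrt h1, Real.sqrt_nonneg (M^2-1)]
  · nlinarith [Real.sq_sqrt h1, Real.sqrt_nonneg (M^2-1)]

lemma rho_one {M : ℝ} (hM : 2 ≤ M) : ρKM M 1 = 1 + (M - Real.sqrt (M^2 - 1)) := by
  rw [ρKM, if_neg (by push_neg; exact sqrt2_inv_lt_one)]
  have : (1:ℝ)^2 * (M ^ 2 - 2 * Real.sqrt (M ^ 2 - 1)) + 2 * Real.sqrt (M ^ 2 - 1) = M^2 := by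
    ring
  rw [this, Real.sqrt_sq (by linarith)]
  ring

lemma deriv_one_KM {M : ℝ} (hM : 2 ≤ M) :
    derivWithin (ρKM M) (Iic 1) 1
      = (1 - Real.sqrt (M^2-1)) + (M^2 - 2*Real.sqrt (M^2-1)) / M := by
  set s := Real.sqrt (M^2 - 1) with hs
  set f : ℝ → ℝ := fun t => t * (1 - s) +
    Real.sqrt (t ^ 2 * (M ^ 2 - 2 * s) + 2 * s) with hf
  have heq : derivWithin (ρKM M) (Iic 1) 1 = derivWithin f (Iic 1) 1 := by
    apply Filter.EventuallyEq.derivWithin_eq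
    · have hmem : Ioi ((Real.sqrt 2)⁻¹) ∈ nhdsWithin (1:ℝ) (Iic 1) :=
        mem_nhdsWithin_of_mem_nhds (Ioi_mem_nhds sqrt2_inv_lt_one)
      filter_upwards [hmem] with t ht
      rw [ρKM, if_neg (not_le.mpr ht)]
    · rw [ρKM, if_neg (not_le.mpr sqrt2_inv_lt_one)]
  rw [heq]
  have hMpos : (0:ℝ) < M := by linarith
  have harg : (1:ℝ)^2 * (M^2 - 2*s) + 2*s = M^2 := by ring
  have h1 : HasDerivAt (fun t : ℝ => t * (1 - s)) (1 - s) 1 := by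
    simpa using (hasDerivAt_id (1:ℝ)).mul_const (1 - s)
  have h2 : HasDerivAt (fun t : ℝ => t^2 * (M^2 - 2*s) + 2*s) (2 * (M^2 - 2*s)) 1 := by
    simpa using ((hasDerivAt_pow 2 (1:ℝ)).mul_const (M^2 - 2*s)).add_const (2*s)
  have hne : (1:ℝ)^2 * (M^2 - 2*s) + 2*s ≠ 0 := by rw [harg]; positivity
  have h3 := h2.sqrt hne
  have h4 := h1.add h3
  have h5 : derivWithin f (Iic 1) 1
      = (1 - s) + 2 * (M^2 - 2*s) / (2 * Real.sqrt ((1:ℝ)^2 * (M^2 - 2*s) + 2*s)) :=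
    h4.hasDerivWithinAt.derivWithin ((uniqueDiffOn_Iic 1) 1 (by simp))
  rw [h5, harg, Real.sqrt_sq hMpos.le]
  field_simp

lemma rho_bounds {M t : ℝ} (hM : 2 ≤ M) (ht0 : 0 < t) (ht1 : t ≤ 1) :
    0 ≤ ρKM M t ∧ ρKM M t ≤ 2 := by
  obtain ⟨hs2, hs1, hsM⟩ := sFacts hM
  set s := Real.sqrt (M^2 - 1) with hsdef
  rw [ρKM]
  split_ifs with h
  · constructor
    · positivity
    · have ht2 : t^2 ≤ 1/2 := by
        have := sq_le_sq' (by linarith [Real.sqrt_nonneg 2, inv_nonneg.mpr (Real.sqrt_nonneg 2)] : -(Real.sqrt 2)⁻¹ ≤ t) h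
        have hsq : ((Real.sqrt 2)⁻¹)^2 = 1/2 := by
          rw [inv_pow, Real.sq_sqrt (by norm_num : (0:ℝ) ≤ 2)]; norm_num
        rw [hsq] at this; exact this
      have hhalf : (1:ℝ)/2 ≤ Real.sqrt (1 - t^2) := by
        nlinarith [Real.sq_sqrt (by linarith : (0:ℝ) ≤ 1 - t^2), Real.sqrt_nonneg (1-t^2)]
      calc (Real.sqrt (1 - t^2))⁻¹ ≤ ((1:ℝ)/2)⁻¹ := by
            apply inv_anti₀ (by norm_num) hhalf
        _ = 2 := by norm_num
  · push_neg at h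
    have hthalf : (1:ℝ)/2 ≤ t := le_trans sqrt2_inv_ge_half h.le
    have ha : M^2 - 2*s = (s-1)^2 := by nlinarith
    have hargnn : 0 ≤ t^2 * (M^2 - 2*s) + 2*s := by nlinarith [sq_nonneg t]
    set r := Real.sqrt (t^2 * (M^2 - 2*s) + 2*s) with hr
    have hr0 : 0 ≤ r := Real.sqrt_nonneg _
    have hr2 : r^2 = t^2 * (M^2 - 2*s) + 2*s := Real.sq_sqrt hargnn
    constructor
    · nlinarith [sq_nonneg (r - t*(s-1)), sq_nonneg (r + t*(s-1)),
        mul_nonneg ht0.le (by linarith : (0:ℝ) ≤ s - 1)]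
    · nlinarith [mul_nonneg ht0.le (by linarith : (0:ℝ) ≤ s - 1),
        sq_nonneg (2 + t*(s-1) - r), sq_nonneg (2 + t*(s-1) + r)]

lemma integral_bound {M : ℝ} (hM : 2 ≤ M) : |∫ t in (0:ℝ)..1, ρKM M t ^ 3| ≤ 8 := by
  have h := intervalIntegral.norm_integral_le_of_norm_le_const
    (C := 8) (f := fun t => ρKM M t ^ 3) (a := (0:ℝ)) (b := 1) ?_
  · simpa using h
  · intro t ht
    rw [uIoc_of_le (by norm_num : (0:ℝ) ≤ 1)] at ht
    obtain ⟨h0, h2⟩ := rho_bounds hM ht.1 ht.2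
    rw [Real.norm_eq_abs]
    show |ρKM M t ^ 3| ≤ 8
    rw [abs_of_nonneg (by positivity)]
    nlinarith [sq_nonneg (ρKM M t)]

/-- As `M → ∞`, `w(M) → 2`. -/
theorem wKM_tendsto_two : Tendsto wKM atTop (nhds 2) := by
  have hA : Tendsto (fun M : ℝ => M - Real.sqrt (M^2 - 1)) atTop (nhds 0) := by
    have h1 : Tendsto (fun M : ℝ => (M + Real.sqrt (M^2 - 1))⁻¹) atTop (nhds 0) := by
      apply Tendsto.inv_tendsto_atTop
      exact tendsto_atTop_mono (fun M => le_add_of_nonneg_right (Real.sqrt_nonneg _)) tendsto_id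
    apply Tendsto.congr' _ h1
    filter_upwards [eventually_ge_atTop (2:ℝ)] with M hM
    obtain ⟨hs2, hs1, hsM⟩ := sFacts hM
    have hpos : 0 < M + Real.sqrt (M^2-1) := by linarith
    field_simp
    nlinarith
  have hB : Tendsto (fun M : ℝ => Real.sqrt (M^2 - 1) / M) atTop (nhds 1) := by
    have h1 : Tendsto (fun M : ℝ => 1 - (M - Real.sqrt (M^2-1)) * M⁻¹) atTop (nhds 1) := by
      have := (hA.mul tendsto_inv_atTop_zero).const_sub 1
      simpa using this
    apply Tendsto.congr' _ h1
    filter_upwards [eventually_ge_atTop (2:ℝ)] with M hM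
    have hM0 : M ≠ 0 := by linarith
    field_simp
    ring
  set g : ℝ → ℝ := fun M => 2 + 2*(M - Real.sqrt (M^2-1)) - 2*(Real.sqrt (M^2-1)/M) with hg
  have hgt : Tendsto g atTop (nhds 0) := by
    have := ((hA.const_mul 2).const_add 2).sub (hB.const_mul 2)
    simpa using this
  have key : ∀ M : ℝ, 2 ≤ M → wKM M =
      2*(1 + (M - Real.sqrt (M^2-1)))^4 - 3 * (∫ t in (0:ℝ)..1, ρKM M t ^ 3) * g M := by
    intro M hM
    rw [wKM, rho_one hM, deriv_one_KM hM]
    have hM0 : M ≠ 0 := by linarith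
    rw [hg]
    have : 1 + (M - Real.sqrt (M^2-1)) + (1 - Real.sqrt (M^2-1) + (M^2 - 2*Real.sqrt (M^2-1))/M)
        = 2 + 2*(M - Real.sqrt (M^2-1)) - 2*(Real.sqrt (M^2-1)/M) := by
      field_simp
      ring
    rw [this]
  have h1 : Tendsto (fun M : ℝ => 2*(1 + (M - Real.sqrt (M^2-1)))^4) atTop (nhds 2) := by
    have := ((hA.const_add 1).pow 4).const_mul 2
    norm_num at this
    exact this
  have h2 : Tendsto (fun M : ℝ => 3 * (∫ t in (0:ℝ)..1, ρKM M t ^ 3) * g M) atTop (nhds 0) := by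
    apply squeeze_zero_norm' (a := fun M => 24 * |g M|)
    · filter_upwards [eventually_ge_atTop (2:ℝ)] with M hM
      rw [Real.norm_eq_abs, abs_mul, abs_mul]
      have := integral_bound hM
      have h3 : |(3:ℝ)| = 3 := by norm_num
      rw [h3]
      nlinarith [abs_nonneg (∫ t in (0:ℝ)..1, ρKM M t ^ 3), abs_nonneg (g M)]
    · have := hgt.abs.const_mul 24
      simpa using this
  have hF := h1.sub h2
  norm_num at hF
  apply Tendsto.congr' _ hF
  filter_upwards [eventually_ge_atTop (2:ℝ)] with M hM
  exact (key M hM).symm
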